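/- arXiv:1904.01188 — 6 statements merged into one kernel-verified Lean document; each statement's English description precedes it below -/
import Mathlib

section
/- For every nonzero integer k and all y, z ∈ [0,1], the Green's function G_k satisfies 0 ≤ G_k(y,z) ≤ 1/(2|k|) · e^{−|k|·|y−z|}. -/
/-! Writing `c = |k|`, `G_k(y, z) = sinh (c u) sinh (c v) / (c sinh c)` with `u = 1 - max y z`,
`v = min y z`, so `u + v = 1 - |y - z|`. The product formula
`2 sinh a sinh b = cosh (a + b) - cosh (a - b) ≤ cosh (a + b) - 1` then gives
`sinh a sinh b ≤ sinh c · e^(a + b - c) / 2` whenever `a, b ≥ 0` and `a + b ≤ c`. -/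

noncomputable def GreenG (k : ℤ) (y z : ℝ) : ℝ :=
  if y ≤ z then Real.sinh ((k : ℝ) * (1 - z)) * Real.sinh ((k : ℝ) * y) / ((k : ℝ) * Real.sinh (k : ℝ))
  else Real.sinh ((k : ℝ) * z) * Real.sinh ((k : ℝ) * (1 - y)) / ((k : ℝ) * Real.sinh (k : ℝ))

open Real

lemma sinh_mul_sinh_le_of_add_le {a b c : ℝ} (ha : 0 ≤ a) (hb : 0 ≤ b) (hab : a + b ≤ c) :
    sinh a * sinh b ≤ sinh c * exp (a + b - c) / 2 := by
  have h_prod : 2 * (sinh a * sinh b) = cosh (a + b) - cosh (a - b) := by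
    rw [cosh_add, cosh_sub]; ring
  have h_rhs : sinh c * exp (a + b - c) = (exp (a + b) - exp (a + b - 2 * c)) / 2 := by
    rw [sinh_eq, div_mul_eq_mul_div, sub_mul, ← exp_add, ← exp_add]; ring_nf
  have h_neg : exp (-(a + b)) ≤ 1 := exp_le_one_iff.mpr (by linarith)
  have h_far : exp (a + b - 2 * c) ≤ 1 := exp_le_one_iff.mpr (by linarith)
  have h_cosh := one_le_cosh (a - b)
  rw [cosh_eq] at h_prod
  linarith

lemma sinh_mul_sinh_div_mul_sinh_abs (a x w : ℝ) :
    sinh (a * x) * sinh (a * w) / (a * sinh a) =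
      sinh (|a| * x) * sinh (|a| * w) / (|a| * sinh |a|) := by
  rcases abs_choice a with h | h <;> rw [h]
  simp only [neg_mul, sinh_neg, mul_neg, neg_neg]

lemma sinh_mul_sinh_div_nonneg {c x w : ℝ} (hc : 0 ≤ c) (hx : 0 ≤ x) (hw : 0 ≤ w) :
    0 ≤ sinh (c * x) * sinh (c * w) / (c * sinh c) := by
  have h_den := sinh_nonneg_iff.mpr hc
  have h_x := sinh_nonneg_iff.mpr (mul_nonneg hc hx)
  have h_w := sinh_nonneg_iff.mpr (mul_nonneg hc hw)
  positivity

lemma sinh_mul_sinh_div_le {c x w : ℝ} (hc : 0 < c) (hx : 0 ≤ x) (hw : 0 ≤ w) (hxw : x + w ≤ 1) :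
    sinh (c * x) * sinh (c * w) / (c * sinh c) ≤ 1 / (2 * c) * exp (-(c * (1 - x - w))) := by
  have h_den : 0 < c * sinh c := mul_pos hc (sinh_pos_iff.mpr hc)
  have key := sinh_mul_sinh_le_of_add_le (c := c) (mul_nonneg hc.le hx) (mul_nonneg hc.le hw)
    (by nlinarith)
  rw [show c * x + c * w - c = -(c * (1 - x - w)) by ring] at key
  rw [div_le_iff₀ h_den]
  calc _ ≤ _ := key
    _ = _ := by field_simp

lemma GreenG_comm (k : ℤ) (y z : ℝ) : GreenG k y z = GreenG k z y := by
  unfold GreenG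
  split_ifs with h₁ h₂ h₂
  · rw [le_antisymm h₁ h₂]
  · ring
  · ring
  · exact absurd (le_of_not_ge h₂) h₁

lemma GreenG_eq_of_le (k : ℤ) {y z : ℝ} (h : y ≤ z) :
    GreenG k y z = sinh (|(k : ℝ)| * (1 - z)) * sinh (|(k : ℝ)| * y) / (|(k : ℝ)| * sinh |(k : ℝ)|) := by
  rw [GreenG, if_pos h, sinh_mul_sinh_div_mul_sinh_abs]

theorem green_pointwise_bound (k : ℤ) (hk : k ≠ 0) (y z : ℝ)
    (hy : y ∈ Set.Icc (0 : ℝ) 1) (hz : z ∈ Set.Icc (0 : ℝ) 1) :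
    0 ≤ GreenG k y z ∧
      GreenG k y z ≤ 1 / (2 * |(k : ℝ)|) * Real.exp (-(|(k : ℝ)| * |y - z|)) := by
  wlog hyz : y ≤ z generalizing y z
  · rw [GreenG_comm, abs_sub_comm]
    exact this z y hz hy (le_of_not_ge hyz)
  have hc : 0 < |(k : ℝ)| := abs_pos.mpr (Int.cast_ne_zero.mpr hk)
  have h1z : 0 ≤ 1 - z := sub_nonneg.mpr hz.2
  rw [GreenG_eq_of_le k hyz]
  refine ⟨sinh_mul_sinh_div_nonneg hc.le h1z hy.1, ?_⟩
  convert sinh_mul_sinh_div_le hc h1z hy.1 (by linarith) using 4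
  rw [abs_of_nonpos (sub_nonpos.mpr hyz)]
  ring
end

section
/- Let s ∈ (0,1) and β ∈ (0,1). There exists μ = μ(β,s) > 0 such that for all a, b ∈ ℝⁿ, if ⟨b⟩ ≥ β·⟨a−b⟩ then ⟨a⟩^s ≤ ⟨b⟩^s + (1−μ)·⟨a−b⟩^s, where ⟨x⟩ = (1 + |x|²)^{1/2}. -/
/-!
Take `μ = 1 - ((β + 1) ^ s - β ^ s)`. Write `B = ⟨b⟩`, `C = ⟨a - b⟩`; then `⟨a⟩ ≤ B + C`. Since
`x ↦ x ^ s` is concave on `[0, ∞)`, its increments over a step of fixed length `C` decrease, so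
`β C ≤ B` gives `(B + C) ^ s - B ^ s ≤ (β C + C) ^ s - (β C) ^ s = ((β + 1) ^ s - β ^ s) C ^ s`.
Strict concavity compares the increment at `β` with the one at `0`: `(β + 1) ^ s - β ^ s < 1`,
i.e. `μ > 0`.
-/

open Real Set

section Increments

variable {S : Set ℝ} {f : ℝ → ℝ} {u v h : ℝ}

/-- Adding the concavity inequalities at these two combinations gives
`f v + f (u + h) ≤ f (v + h) + f u`. -/
lemma shift_eq_convex_combination (hne : u + h - v ≠ 0) :
    (1 - h / (u + h - v)) • v + (h / (u + h - v)) • (u + h) = v + h ∧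
      (h / (u + h - v)) • v + (1 - h / (u + h - v)) • (u + h) = u := by
  simp only [smul_eq_mul]
  constructor <;> field_simp <;> ring

lemma ConcaveOn.map_add_sub_map_le (hf : ConcaveOn ℝ S f) (hv : v ∈ S) (hu : u + h ∈ S)
    (hvu : v ≤ u) (hh : 0 ≤ h) : f (u + h) - f u ≤ f (v + h) - f v := by
  rcases hvu.eq_or_lt with rfl | hvu
  · exact le_rfl
  have hpos : 0 < u + h - v := by linarith
  obtain ⟨e₁, e₂⟩ := shift_eq_convex_combination hpos.ne'
  have ht₀ : 0 ≤ h / (u + h - v) := div_nonneg hh hpos.le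
  have ht₁ : 0 ≤ 1 - h / (u + h - v) := sub_nonneg.2 ((div_le_one hpos).2 (by linarith))
  have h₁ := hf.2 hv hu ht₁ ht₀ (sub_add_cancel 1 _)
  have h₂ := hf.2 hv hu ht₀ ht₁ (add_sub_cancel _ 1)
  rw [e₁] at h₁
  rw [e₂] at h₂
  simp only [smul_eq_mul] at h₁ h₂
  linarith

lemma StrictConcaveOn.map_add_sub_map_lt (hf : StrictConcaveOn ℝ S f) (hv : v ∈ S)
    (hu : u + h ∈ S) (hvu : v < u) (hh : 0 < h) : f (u + h) - f u < f (v + h) - f v := by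
  have hpos : 0 < u + h - v := by linarith
  obtain ⟨e₁, e₂⟩ := shift_eq_convex_combination hpos.ne'
  have ht₀ : 0 < h / (u + h - v) := div_pos hh hpos
  have ht₁ : 0 < 1 - h / (u + h - v) := sub_pos.2 ((div_lt_one hpos).2 (by linarith))
  have hne : v ≠ u + h := by linarith
  have h₁ := hf.2 hv hu hne ht₁ ht₀ (sub_add_cancel 1 _)
  have h₂ := hf.2 hv hu hne ht₀ ht₁ (add_sub_cancel _ 1)
  rw [e₁] at h₁
  rw [e₂] at h₂
  simp only [smul_eq_mul] at h₁ h₂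
  linarith

end Increments

lemma rpow_add_one_sub_rpow_lt_one {s β : ℝ} (hs₀ : 0 < s) (hs₁ : s < 1) (hβ : 0 < β) :
    (β + 1) ^ s - β ^ s < 1 := by
  simpa [zero_rpow hs₀.ne'] using (strictConcaveOn_rpow hs₀ hs₁).map_add_sub_map_lt
    (mem_Ici.2 le_rfl) (mem_Ici.2 (by positivity : (0 : ℝ) ≤ β + 1)) hβ one_pos

lemma add_rpow_le_rpow_add_mul_of_mul_le {s β B C : ℝ} (hs₀ : 0 ≤ s) (hs₁ : s ≤ 1) (hβ : 0 ≤ β)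
    (hC : 0 ≤ C) (hBC : β * C ≤ B) : (B + C) ^ s ≤ B ^ s + ((β + 1) ^ s - β ^ s) * C ^ s := by
  have hinc := (concaveOn_rpow hs₀ hs₁).map_add_sub_map_le (h := C)
    (mem_Ici.2 (by positivity)) (mem_Ici.2 (by nlinarith)) hBC hC
  rw [show β * C + C = (β + 1) * C by ring, mul_rpow (by positivity) hC, mul_rpow hβ hC] at hinc
  linarith

lemma sqrt_one_add_sq_add_le (p q : ℝ) :
    √(1 + (p + q) ^ 2) ≤ √(1 + p ^ 2) + √(1 + q ^ 2) := by
  have hp : |p| ≤ √(1 + p ^ 2) := le_sqrt_of_sq_le (by rw [sq_abs]; linarith)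
  have hq : |q| ≤ √(1 + q ^ 2) := le_sqrt_of_sq_le (by rw [sq_abs]; linarith)
  have hpq : p * q ≤ √(1 + p ^ 2) * √(1 + q ^ 2) :=
    (le_abs_self _).trans (abs_mul p q ▸ mul_le_mul hp hq (abs_nonneg q) (sqrt_nonneg _))
  rw [sqrt_le_left (by positivity), add_sq (√(1 + p ^ 2)), sq_sqrt (by positivity),
    sq_sqrt (by positivity)]
  linarith

lemma sqrt_one_add_norm_add_sq_le {E : Type*} [SeminormedAddGroup E] (x y : E) :
    √(1 + ‖x + y‖ ^ 2) ≤ √(1 + ‖x‖ ^ 2) + √(1 + ‖y‖ ^ 2) :=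
  le_trans (by gcongr; exact norm_add_le x y) (sqrt_one_add_sq_add_le ‖x‖ ‖y‖)

theorem japanese_bracket_ineq (s β : ℝ) (hs : s ∈ Set.Ioo (0 : ℝ) 1) (hβ : β ∈ Set.Ioo (0 : ℝ) 1) :
    ∃ μ > (0 : ℝ), ∀ (n : ℕ) (a b : EuclideanSpace ℝ (Fin n)),
      β * Real.sqrt (1 + ‖a - b‖ ^ 2) ≤ Real.sqrt (1 + ‖b‖ ^ 2) →
      Real.sqrt (1 + ‖a‖ ^ 2) ^ s ≤
        Real.sqrt (1 + ‖b‖ ^ 2) ^ s + (1 - μ) * Real.sqrt (1 + ‖a - b‖ ^ 2) ^ s := by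
  obtain ⟨hs₀, hs₁⟩ := hs
  refine ⟨1 - ((β + 1) ^ s - β ^ s), sub_pos.2 (rpow_add_one_sub_rpow_lt_one hs₀ hs₁ hβ.1), ?_⟩
  intro n a b hab
  rw [sub_sub_cancel]
  calc √(1 + ‖a‖ ^ 2) ^ s ≤ (√(1 + ‖b‖ ^ 2) + √(1 + ‖a - b‖ ^ 2)) ^ s := by
        gcongr
        simpa using sqrt_one_add_norm_add_sq_le b (a - b)
    _ ≤ _ := add_rpow_le_rpow_add_mul_of_mul_le hs₀.le hs₁.le hβ.1.le (sqrt_nonneg _) hab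
end

section
/- Let λ > 0 and s ∈ (0,1). There exists a constant C = C(λ,s) such that for every nonzero integer k and all ζ, η ∈ ℝ, |e^{λ⟨k,η⟩^s} − e^{λ⟨k,η−ζ⟩^s}| ≤ C · ⟨k, η−ζ⟩^{s−1} · e^{λ(⟨k,η−ζ⟩^s + ⟨ζ⟩^s)}, where ⟨k,ξ⟩ := (1 + k² + ξ²)^{1/2} and ⟨ζ⟩ := (1 + ζ²)^{1/2}. -/
/-!
Write `a = ⟨k,η⟩`, `b = ⟨k,η-ζ⟩` and `d = |a - b| ≤ |ζ| ≤ ⟨ζ⟩`. Concavity of `t ↦ t^s` gives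
`max(a,b)^s ≤ (b + d)^s ≤ b^s + d^s - (1 - s) min(b,d)^s`, so `e^{λ max(a,b)^s}` is bounded by
`e^{λ(b^s + ⟨ζ⟩^s)}` times a stretched-exponential gain `e^{-(1-s)λ min(b,d)^s}`, which
absorbs any linear factor in `min(b,d)`. If `2d ≤ b`, then `min(a,b) ≥ b/2` and the tangent-line
bound for `t^s` there bounds the difference by `2λ b^{s-1} d e^{λ max(a,b)^s}`, and the gain
absorbs `d`; if `b ≤ 2d`, the difference is at most
`e^{λ max(a,b)^s} ≤ b^{s-1} · b · e^{λ max(a,b)^s}` and the gain absorbs `b`.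
-/

noncomputable def jap (k : ℤ) (ξ : ℝ) : ℝ := Real.sqrt (1 + (k : ℝ) ^ 2 + ξ ^ 2)

noncomputable def japR (ζ : ℝ) : ℝ := Real.sqrt (1 + ζ ^ 2)

open Real

section RpowBounds

variable {s x y : ℝ}

theorem rpow_le_rpow_add_mul_sub (hs0 : 0 ≤ s) (hs1 : s ≤ 1) (hy : 0 < y) (hx : 0 ≤ x) :
    x ^ s ≤ y ^ s + s * y ^ (s - 1) * (x - y) := by
  have hbern := rpow_one_add_le_one_add_mul_self
    (s := x / y - 1) (by linarith [div_nonneg hx hy.le]) hs0 hs1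
  rw [add_sub_cancel] at hbern
  calc x ^ s = y ^ s * (x / y) ^ s := by rw [div_rpow hx hy.le]; field_simp
    _ ≤ y ^ s * (1 + s * (x / y - 1)) := by gcongr
    _ = y ^ s + s * y ^ (s - 1) * (x - y) := by rw [rpow_sub_one hy.ne']; field_simp

theorem abs_rpow_sub_rpow_le (hs0 : 0 ≤ s) (hs1 : s ≤ 1) (hx : 0 < x) (hy : 0 < y) :
    |x ^ s - y ^ s| ≤ s * min x y ^ (s - 1) * |x - y| := by
  wlog hyx : y ≤ x generalizing x y
  · rw [abs_sub_comm, min_comm, abs_sub_comm x]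
    exact this hy hx (le_of_not_ge hyx)
  rw [min_eq_right hyx, abs_of_nonneg (sub_nonneg.2 (rpow_le_rpow hy.le hyx hs0)),
    abs_of_nonneg (sub_nonneg.2 hyx)]
  linarith [rpow_le_rpow_add_mul_sub hs0 hs1 hy hx.le]

theorem rpow_add_le_rpow_add_mul_rpow (hs0 : 0 ≤ s) (hs1 : s ≤ 1) (hy : 0 ≤ y)
    (hyx : y ≤ x) :
    (x + y) ^ s ≤ x ^ s + s * y ^ s := by
  rcases hy.eq_or_lt with rfl | hy
  · simpa using mul_nonneg hs0 (rpow_nonneg le_rfl s)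
  have hx : 0 < x := hy.trans_le hyx
  calc (x + y) ^ s ≤ x ^ s + s * x ^ (s - 1) * (x + y - x) :=
        rpow_le_rpow_add_mul_sub hs0 hs1 hx (by positivity)
    _ ≤ x ^ s + s * y ^ (s - 1) * y := by
        have := rpow_le_rpow_of_nonpos hy hyx (by linarith : s - 1 ≤ 0)
        rw [add_sub_cancel_left]
        gcongr
    _ = x ^ s + s * y ^ s := by rw [rpow_sub_one hy.ne']; field_simp

theorem rpow_add_add_mul_min_rpow_le (hs0 : 0 ≤ s) (hs1 : s ≤ 1) (hx : 0 ≤ x) (hy : 0 ≤ y) :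
    (x + y) ^ s + (1 - s) * min x y ^ s ≤ x ^ s + y ^ s := by
  wlog hyx : y ≤ x generalizing x y
  · rw [add_comm x, min_comm, add_comm (x ^ s)]
    exact this hy hx (le_of_not_ge hyx)
  rw [min_eq_right hyx]
  linarith [rpow_add_le_rpow_add_mul_rpow hs0 hs1 hy hyx]

end RpowBounds

theorem exists_le_mul_exp_mul_rpow {α s : ℝ} (hα : 0 < α) (hs : 0 < s) :
    ∃ C > 0, ∀ t : ℝ, 0 ≤ t → t ≤ C * exp (α * t ^ s) := by
  obtain ⟨n, hn⟩ := exists_nat_ge (1 / s)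
  have hsn : 1 ≤ s * n := by rwa [div_le_iff₀' hs] at hn
  refine ⟨1 + n.factorial / α ^ n, by positivity, fun t ht => ?_⟩
  have hts : 0 ≤ t ^ s := rpow_nonneg ht s
  have hpow : t ≤ 1 + (t ^ s) ^ n := by
    rcases le_total t 1 with h | h
    · linarith [pow_nonneg hts n]
    · calc t = t ^ (1 : ℝ) := (rpow_one t).symm
        _ ≤ t ^ (s * n) := rpow_le_rpow_of_exponent_le h hsn
        _ ≤ 1 + (t ^ s) ^ n := by rw [rpow_mul ht, rpow_natCast]; linarith
  have hfact : (t ^ s) ^ n ≤ n.factorial / α ^ n * exp (α * t ^ s) := by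
    have := pow_div_factorial_le_exp _ (mul_nonneg hα.le hts) n
    rw [mul_pow, div_le_iff₀ (by positivity)] at this
    rw [div_mul_eq_mul_div, le_div_iff₀ (by positivity)]
    linarith
  nlinarith [one_le_exp (mul_nonneg hα.le hts)]

theorem abs_exp_sub_exp_le_mul_exp {x y w : ℝ} (hx : x ≤ w) (hy : y ≤ w) :
    |exp x - exp y| ≤ |x - y| * exp w := by
  wlog hyx : y ≤ x generalizing x y
  · rw [abs_sub_comm, abs_sub_comm x]
    exact this hy hx (le_of_not_ge hyx)
  calc |exp x - exp y| = exp x * (1 - exp (y - x)) := by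
        rw [abs_of_nonneg (sub_nonneg.2 (exp_le_exp.2 hyx)), exp_sub]; field_simp
    _ ≤ exp x * (x - y) :=
        mul_le_mul_of_nonneg_left (by linarith [add_one_le_exp (y - x)]) (exp_pos x).le
    _ ≤ |x - y| * exp w := by rw [abs_of_nonneg (sub_nonneg.2 hyx), mul_comm]; gcongr

theorem abs_exp_sub_exp_le_exp {x y w : ℝ} (hx : x ≤ w) (hy : y ≤ w) :
    |exp x - exp y| ≤ exp w := by
  rw [abs_sub_le_iff]
  constructor <;> linarith [exp_pos x, exp_pos y, exp_le_exp.2 hx, exp_le_exp.2 hy]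

section ExpRpowDifference

variable {s lam C a b z : ℝ}

theorem exp_mul_max_rpow_mul_exp_le (hs0 : 0 ≤ s) (hs1 : s ≤ 1) (hlam : 0 ≤ lam) (ha : 0 ≤ a)
    (hb : 0 ≤ b) (hz : |a - b| ≤ z) :
    exp (lam * max a b ^ s) * exp ((1 - s) * lam * min b |a - b| ^ s) ≤
      exp (lam * (b ^ s + z ^ s)) := by
  have hmax : max a b ≤ b + |a - b| :=
    max_le (by linarith [le_abs_self (a - b)]) (by linarith [abs_nonneg (a - b)])
  have hgain : max a b ^ s + (1 - s) * min b |a - b| ^ s ≤ b ^ s + z ^ s :=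
    calc max a b ^ s + (1 - s) * min b |a - b| ^ s
        ≤ (b + |a - b|) ^ s + (1 - s) * min b |a - b| ^ s := by
          gcongr
      _ ≤ b ^ s + |a - b| ^ s := rpow_add_add_mul_min_rpow_le hs0 hs1 hb (abs_nonneg _)
      _ ≤ b ^ s + z ^ s := by gcongr
  rw [← exp_add]
  exact exp_le_exp.2 (by nlinarith [mul_le_mul_of_nonneg_left hgain hlam])

theorem abs_exp_mul_rpow_sub_le_of_two_mul_abs_sub_le (hs0 : 0 ≤ s) (hs1 : s ≤ 1)
    (hlam : 0 ≤ lam) (hC0 : 0 ≤ C) (hC : ∀ t : ℝ, 0 ≤ t → t ≤ C * exp ((1 - s) * lam * t ^ s))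
    (ha : 0 ≤ a) (hb : 0 < b) (hab : 2 * |a - b| ≤ b) (hz : |a - b| ≤ z) :
    |exp (lam * a ^ s) - exp (lam * b ^ s)| ≤
      2 * lam * C * b ^ (s - 1) * exp (lam * (b ^ s + z ^ s)) := by
  have hmin : b / 2 ≤ min a b := le_min (by linarith [neg_abs_le (a - b)]) (by linarith)
  have hm : 0 < min a b := by linarith
  have hmin_rpow : min a b ^ (s - 1) ≤ 2 * b ^ (s - 1) := by
    rw [rpow_sub_one hm.ne', rpow_sub_one hb.ne']
    calc min a b ^ s / min a b ≤ b ^ s / min a b := by gcongr; exact min_le_right a b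
      _ ≤ b ^ s / (b / 2) := by gcongr
      _ = 2 * (b ^ s / b) := by field_simp
  have hgain := exp_mul_max_rpow_mul_exp_le hs0 hs1 hlam ha hb.le hz
  rw [min_eq_right (by linarith [abs_nonneg (a - b)])] at hgain
  calc |exp (lam * a ^ s) - exp (lam * b ^ s)|
      ≤ |lam * a ^ s - lam * b ^ s| * exp (lam * max a b ^ s) :=
        abs_exp_sub_exp_le_mul_exp (by gcongr; exact le_max_left a b)
          (by gcongr; exact le_max_right a b)
    _ = lam * |a ^ s - b ^ s| * exp (lam * max a b ^ s) := by
        rw [← mul_sub, abs_mul, abs_of_nonneg hlam]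
    _ ≤ lam * (s * min a b ^ (s - 1) * |a - b|) * exp (lam * max a b ^ s) := by
        gcongr; exact abs_rpow_sub_rpow_le hs0 hs1 (hm.trans_le (min_le_left a b)) hb
    _ ≤ lam * (1 * (2 * b ^ (s - 1)) * (C * exp ((1 - s) * lam * |a - b| ^ s))) *
          exp (lam * max a b ^ s) := by
        gcongr; exact hC _ (abs_nonneg _)
    _ = 2 * lam * C * b ^ (s - 1) *
          (exp (lam * max a b ^ s) * exp ((1 - s) * lam * |a - b| ^ s)) := by ring
    _ ≤ 2 * lam * C * b ^ (s - 1) * exp (lam * (b ^ s + z ^ s)) := by gcongr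

theorem abs_exp_mul_rpow_sub_le_of_le_two_mul_abs_sub (hs0 : 0 ≤ s) (hs1 : s ≤ 1)
    (hlam : 0 ≤ lam) (hC0 : 0 ≤ C) (hC : ∀ t : ℝ, 0 ≤ t → t ≤ C * exp ((1 - s) * lam * t ^ s))
    (ha : 0 ≤ a) (hb : 1 ≤ b) (hab : b ≤ 2 * |a - b|) (hz : |a - b| ≤ z) :
    |exp (lam * a ^ s) - exp (lam * b ^ s)| ≤
      2 * C * b ^ (s - 1) * exp (lam * (b ^ s + z ^ s)) := by
  have hb0 : 0 < b := by linarith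
  have hb_le : b ≤ 2 * C * exp ((1 - s) * lam * min b |a - b| ^ s) :=
    calc b = 2 * (b / 2) := by ring
      _ ≤ 2 * (C * exp ((1 - s) * lam * (b / 2) ^ s)) := by gcongr; exact hC _ (by positivity)
      _ ≤ 2 * C * exp ((1 - s) * lam * min b |a - b| ^ s) := by
          rw [← mul_assoc]
          have : 0 ≤ 1 - s := by linarith
          gcongr
          exact le_min (by linarith) (by linarith)
  have hone : 1 ≤ b ^ (s - 1) * b := by
    rw [rpow_sub_one hb0.ne', div_mul_cancel₀ _ hb0.ne']
    exact one_le_rpow hb hs0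
  calc |exp (lam * a ^ s) - exp (lam * b ^ s)| ≤ exp (lam * max a b ^ s) :=
        abs_exp_sub_exp_le_exp (by gcongr; exact le_max_left a b)
          (by gcongr; exact le_max_right a b)
    _ ≤ b ^ (s - 1) * b * exp (lam * max a b ^ s) := le_mul_of_one_le_left (exp_pos _).le hone
    _ ≤ b ^ (s - 1) * (2 * C * exp ((1 - s) * lam * min b |a - b| ^ s)) *
          exp (lam * max a b ^ s) := by gcongr
    _ = 2 * C * b ^ (s - 1) *
          (exp (lam * max a b ^ s) * exp ((1 - s) * lam * min b |a - b| ^ s)) := by ring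
    _ ≤ 2 * C * b ^ (s - 1) * exp (lam * (b ^ s + z ^ s)) := by
        gcongr; exact exp_mul_max_rpow_mul_exp_le hs0 hs1 hlam ha hb0.le hz

end ExpRpowDifference

theorem exists_abs_exp_mul_rpow_sub_le {lam s : ℝ} (hlam : 0 < lam) (hs0 : 0 < s) (hs1 : s < 1) :
    ∃ C > 0, ∀ a b z : ℝ, 0 ≤ a → 1 ≤ b → |a - b| ≤ z →
      |exp (lam * a ^ s) - exp (lam * b ^ s)| ≤
        C * b ^ (s - 1) * exp (lam * (b ^ s + z ^ s)) := by
  obtain ⟨C, hC0, hC⟩ := exists_le_mul_exp_mul_rpow (mul_pos (sub_pos.2 hs1) hlam) hs0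
  refine ⟨2 * lam * C + 2 * C, by positivity, fun a b z ha hb hz => ?_⟩
  rcases le_total (2 * |a - b|) b with hab | hab
  · calc _ ≤ 2 * lam * C * b ^ (s - 1) * exp (lam * (b ^ s + z ^ s)) :=
          abs_exp_mul_rpow_sub_le_of_two_mul_abs_sub_le hs0.le hs1.le hlam.le hC0.le hC ha
            (by linarith) hab hz
      _ ≤ _ := by gcongr ?_ * _ * _; linarith
  · calc _ ≤ 2 * C * b ^ (s - 1) * exp (lam * (b ^ s + z ^ s)) :=
          abs_exp_mul_rpow_sub_le_of_le_two_mul_abs_sub hs0.le hs1.le hlam.le hC0.le hC ha hb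
            hab hz
      _ ≤ _ := by gcongr ?_ * _ * _; nlinarith

theorem jap_eq_norm (k : ℤ) (ξ : ℝ) :
    jap k ξ = ‖((√(1 + (k : ℝ) ^ 2) : ℝ) : ℂ) + ξ * Complex.I‖ := by
  rw [Complex.norm_add_mul_I, sq_sqrt (by positivity), jap]

theorem abs_jap_sub_jap_le (k : ℤ) (ξ ξ' : ℝ) : |jap k ξ - jap k ξ'| ≤ |ξ - ξ'| := by
  rw [jap_eq_norm, jap_eq_norm]
  refine (abs_norm_sub_norm_le _ _).trans_eq ?_
  rw [add_sub_add_left_eq_sub, ← sub_mul, norm_mul, Complex.norm_I, mul_one,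
    ← Complex.ofReal_sub, Complex.norm_real, Real.norm_eq_abs]

theorem one_le_jap (k : ℤ) (ξ : ℝ) : 1 ≤ jap k ξ :=
  one_le_sqrt.2 (by nlinarith [sq_nonneg (k : ℝ), sq_nonneg ξ])

theorem abs_le_japR (ζ : ℝ) : |ζ| ≤ japR ζ :=
  abs_le_sqrt (by linarith)

theorem exp_gevrey_difference_bound (lam s : ℝ) (hlam : 0 < lam) (hs : s ∈ Set.Ioo (0 : ℝ) 1) :
    ∃ C > (0 : ℝ), ∀ (k : ℤ), k ≠ 0 → ∀ (ζ η : ℝ),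
      |Real.exp (lam * jap k η ^ s) - Real.exp (lam * jap k (η - ζ) ^ s)| ≤
        C * jap k (η - ζ) ^ (s - 1) *
          Real.exp (lam * (jap k (η - ζ) ^ s + japR ζ ^ s)) := by
  obtain ⟨C, hC, hbound⟩ := exists_abs_exp_mul_rpow_sub_le hlam hs.1 hs.2
  refine ⟨C, hC, fun k _ ζ η => hbound _ _ _ (zero_le_one.trans (one_le_jap k η))
    (one_le_jap k (η - ζ)) ?_⟩
  calc |jap k η - jap k (η - ζ)| ≤ |η - (η - ζ)| := abs_jap_sub_jap_le k η (η - ζ)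
    _ = |ζ| := by rw [sub_sub_cancel]
    _ ≤ japR ζ := abs_le_japR ζ
end

section
/- Let ω₀ be a Schwartz-class function on 𝕋 × ℝ with Fourier transform bounded: |ω̃₀(k,ξ)| ≤ M·⟨k,ξ⟩^{−4} for all k ∈ ℤ, ξ ∈ ℝ. Let ψ(t) solve Δψ(t) = ω₀(x−yt, y) on 𝕋 × ℝ. Then for each nonzero integer k and t ≥ 0, the Fourier transform satisfies |ψ̃(t,k,ξ)| = |ω̃₀(k,ξ+kt)|/(k²+ξ²), and consequently ‖ψ̃(t,k,·)‖_{L²_ξ} ≤ C·M·k^{−2}·⟨t⟩^{−2} for an absolute constant C. -/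
/-! Along the shear the frequency `ξ` of `ψ̃(t, k, ·)` is paired with the frequency `η = ξ + k t`
of `ω̃₀`. For `|k| ≥ 1` one has `k² ⟨t⟩² ≤ 4 ⟨k, η⟩² (k² + ξ²)`: either `|ξ| ≥ |k t| / 2`, or
`|η| ≥ |k t| / 2`. Spending two of the four powers of `⟨k, η⟩⁻¹` on this bound leaves
`|ψ̃(t, k, ξ)| ≤ 4 M k⁻² ⟨t⟩⁻² ⟨η⟩⁻¹`, which is square integrable in `ξ` with
`∫ ⟨η⟩⁻² dξ = π`. -/

open MeasureTheory

lemma jap_rpow_neg_four (k : ℤ) (ξ : ℝ) :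
    jap k ξ ^ (-4 : ℝ) = ((1 + (k : ℝ) ^ 2 + ξ ^ 2) ^ 2)⁻¹ := by
  have hsq : jap k ξ ^ 2 = 1 + (k : ℝ) ^ 2 + ξ ^ 2 := Real.sq_sqrt (by positivity)
  rw [show (-4 : ℝ) = ((-4 : ℤ) : ℝ) by norm_num, Real.rpow_intCast,
    show (-4 : ℤ) = -((2 * 2 : ℕ) : ℤ) by norm_num, zpow_neg, zpow_natCast, pow_mul, hsq]

lemma jap_rpow_neg_four_pos (k : ℤ) (ξ : ℝ) : 0 < jap k ξ ^ (-4 : ℝ) := by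
  rw [jap_rpow_neg_four]
  positivity

lemma sq_mul_one_add_sq_le (k t ξ : ℝ) (hk : 1 ≤ k ^ 2) :
    k ^ 2 * (1 + t ^ 2) ≤ 4 * ((1 + k ^ 2 + (ξ + k * t) ^ 2) * (k ^ 2 + ξ ^ 2)) := by
  rcases le_or_gt ((k * t) ^ 2 / 4) (ξ ^ 2) with h | h
  · nlinarith [sq_nonneg (ξ + k * t), sq_nonneg ξ, sq_nonneg (k * t),
      mul_nonneg (add_nonneg (sq_nonneg k) (sq_nonneg ξ)) (sq_nonneg (ξ + k * t))]
  · nlinarith [sq_nonneg (2 * ξ + k * t), sq_nonneg ξ, sq_nonneg (k * t),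
      mul_nonneg (add_nonneg (sq_nonneg k) (sq_nonneg ξ)) (sq_nonneg (ξ + k * t)),
      mul_le_mul_of_nonneg_left hk (sq_nonneg (k * t))]

lemma div_sq_le_of_le_inv_sq (k t ξ M a : ℝ) (hk : 1 ≤ k ^ 2) (hM : 0 ≤ M) (ha : 0 ≤ a)
    (haM : a ≤ M * ((1 + k ^ 2 + (ξ + k * t) ^ 2) ^ 2)⁻¹) :
    (a / (k ^ 2 + ξ ^ 2)) ^ 2 ≤
      (4 * M / (k ^ 2 * (1 + t ^ 2))) ^ 2 * (1 + (ξ + k * t) ^ 2)⁻¹ := by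
  set S := 1 + k ^ 2 + (ξ + k * t) ^ 2
  set D := k ^ 2 + ξ ^ 2
  set Q := k ^ 2 * (1 + t ^ 2)
  have hD : 0 < D := by positivity
  have hQ : 0 < Q := by positivity
  have hS : 1 + (ξ + k * t) ^ 2 ≤ S := by simp only [S]; linarith
  have hQSD : Q / 4 ≤ S * D := by linarith [sq_mul_one_add_sq_le k t ξ hk]
  have hbound : a / D ≤ 4 * M / Q / S :=
    calc a / D ≤ M * (S ^ 2)⁻¹ / D := by gcongr
      _ = M / (S * (S * D)) := by field_simp
      _ ≤ M / (S * (Q / 4)) := by gcongr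
      _ = 4 * M / Q / S := by field_simp
  calc (a / D) ^ 2 ≤ (4 * M / Q / S) ^ 2 := by gcongr
    _ = (4 * M / Q) ^ 2 * (S ^ 2)⁻¹ := by rw [div_pow, div_eq_mul_inv]
    _ ≤ (4 * M / Q) ^ 2 * (1 + (ξ + k * t) ^ 2)⁻¹ := by
        gcongr
        nlinarith

lemma integral_le_pi_mul_of_le_inv_one_add_sq {f : ℝ → ℝ} {A s : ℝ} (hA : 0 ≤ A)
    (hf : ∀ ξ, f ξ ≤ A * (1 + (ξ + s) ^ 2)⁻¹) : ∫ ξ, f ξ ≤ Real.pi * A := by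
  by_cases hfi : Integrable f
  · calc ∫ ξ, f ξ ≤ ∫ ξ, A * (1 + (ξ + s) ^ 2)⁻¹ :=
          integral_mono hfi ((integrable_inv_one_add_sq.comp_add_right s).const_mul A) hf
      _ = Real.pi * A := by
          rw [integral_const_mul, integral_add_right_eq_self (fun ξ ↦ (1 + ξ ^ 2)⁻¹) s,
            integral_univ_inv_one_add_sq, mul_comm]
  · rw [integral_undef hfi]
    positivity

theorem stream_function_decay :
    ∃ C > (0 : ℝ), ∀ (M : ℝ) (F Ψ : ℤ → ℝ → ℂ) (t : ℝ), 0 ≤ t →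
      (∀ (k : ℤ) (ξ : ℝ), ‖F k ξ‖ ≤ M * jap k ξ ^ (-4 : ℝ)) →
      (∀ (k : ℤ) (ξ : ℝ), Ψ k ξ = -F k (ξ + (k : ℝ) * t) / ((k : ℝ) ^ 2 + ξ ^ 2)) →
      ∀ (k : ℤ), k ≠ 0 →
        (∀ ξ : ℝ, ‖Ψ k ξ‖ = ‖F k (ξ + (k : ℝ) * t)‖ / ((k : ℝ) ^ 2 + ξ ^ 2)) ∧
        Real.sqrt (∫ ξ : ℝ, ‖Ψ k ξ‖ ^ 2) ≤ C * M / (k : ℝ) ^ 2 / (1 + t ^ 2) := by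
  refine ⟨8, by norm_num, fun M F Ψ t _ hF hΨ k hk ↦ ?_⟩
  have hM : 0 ≤ M :=
    nonneg_of_mul_nonneg_left ((norm_nonneg _).trans (hF 0 0)) (jap_rpow_neg_four_pos 0 0)
  have hk1 : (1 : ℝ) ≤ (k : ℝ) ^ 2 := by
    exact_mod_cast (one_le_sq_iff_one_le_abs _).mpr (Int.one_le_abs hk)
  have hnorm (ξ : ℝ) : ‖Ψ k ξ‖ = ‖F k (ξ + (k : ℝ) * t)‖ / ((k : ℝ) ^ 2 + ξ ^ 2) := by
    rw [hΨ, norm_div, norm_neg]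
    norm_cast
    rw [Real.norm_of_nonneg (by positivity)]
  refine ⟨hnorm, ?_⟩
  set B := 4 * M / ((k : ℝ) ^ 2 * (1 + t ^ 2))
  have hpointwise (ξ : ℝ) : ‖Ψ k ξ‖ ^ 2 ≤ B ^ 2 * (1 + (ξ + (k : ℝ) * t) ^ 2)⁻¹ := by
    rw [hnorm]
    exact div_sq_le_of_le_inv_sq _ _ _ _ _ hk1 hM (norm_nonneg _)
      (jap_rpow_neg_four k _ ▸ hF k _)
  calc Real.sqrt (∫ ξ : ℝ, ‖Ψ k ξ‖ ^ 2) ≤ 2 * B := by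
        rw [Real.sqrt_le_iff]
        refine ⟨by positivity, ?_⟩
        calc ∫ ξ : ℝ, ‖Ψ k ξ‖ ^ 2 ≤ Real.pi * B ^ 2 :=
              integral_le_pi_mul_of_le_inv_one_add_sq (sq_nonneg B) hpointwise
          _ ≤ (2 * B) ^ 2 := by nlinarith [Real.pi_le_four, sq_nonneg B]
    _ = 8 * M / (k : ℝ) ^ 2 / (1 + t ^ 2) := by
        simp only [B]
        rw [div_div, mul_div_assoc']
        ring
end

section
/- Let b : ℝ → ℝ be smooth with b'(y) ≥ ϑ > 0 for all y and |b^{(m)}(y)| ≤ L^m (m+1)^{m/s} for all m ≥ 1 and y ∈ I (an open interval), where s ∈ (0,1), L ≥ 1. Then the inverse function b^{−1} : b(I) → I satisfies |D^m(b^{−1})(x)| ≤ M^m (m+1)^{m/s} for all m ≥ 1 and x ∈ b(I), for some M = M(s,L,ϑ). -/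
open Finset Real

namespace GevAux

lemma infty_le : (1 : WithTop ℕ∞) ≤ ((⊤:ℕ∞) : WithTop ℕ∞) := by exact_mod_cast le_top

theorem iteratedDeriv_smooth {f : ℝ → ℝ} (hf : ContDiff ℝ (⊤:ℕ∞) f) (n : ℕ) :
    ContDiff ℝ (⊤:ℕ∞) (iteratedDeriv n f) := by
  rw [iteratedDeriv_eq_iterate]; exact hf.iterate_deriv n

theorem hasDerivAt_iteratedDeriv {f : ℝ → ℝ} (hf : ContDiff ℝ (⊤:ℕ∞) f) (n : ℕ) (x : ℝ) :
    HasDerivAt (iteratedDeriv n f) (iteratedDeriv (n+1) f x) x := by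
  rw [iteratedDeriv_succ]
  exact ((iteratedDeriv_smooth hf n).differentiable (lt_of_lt_of_le zero_lt_one infty_le).ne' x).hasDerivAt

private theorem pascal_sum (n : ℕ) (A B : ℕ → ℝ) :
    ∑ j ∈ Finset.range (n+1), (n.choose j : ℝ) * (A (j+1) * B (n-j) + A j * B (n-j+1))
      = ∑ j ∈ Finset.range (n+2), ((n+1).choose j : ℝ) * A j * B (n+1-j) := by
  have e1 : ∀ j ∈ Finset.range (n+1),
      (n.choose j : ℝ) * (A (j+1) * B (n-j) + A j * B (n-j+1))
        = (n.choose j : ℝ) * A (j+1) * B (n-j) + (n.choose j : ℝ) * A j * B (n+1-j) := by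
    intro j hj
    rw [Finset.mem_range] at hj
    have : n - j + 1 = n + 1 - j := by omega
    rw [mul_add, ← mul_assoc, ← mul_assoc, this]
  rw [Finset.sum_congr rfl e1, Finset.sum_add_distrib]
  rw [Finset.sum_range_succ' (fun j => ((n+1).choose j : ℝ) * A j * B (n+1-j)) (n+1)]
  have e2 : ∀ j ∈ Finset.range (n+1),
      ((n+1).choose (j+1) : ℝ) * A (j+1) * B (n+1-(j+1))
        = (n.choose j : ℝ) * A (j+1) * B (n-j) + (n.choose (j+1) : ℝ) * A (j+1) * B (n-j) := by
    intro j hj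
    have hb : n+1-(j+1) = n-j := by omega
    rw [Nat.choose_succ_succ n j, hb]
    push_cast
    ring
  rw [Finset.sum_congr rfl e2, Finset.sum_add_distrib]
  have e3 : ∑ j ∈ Finset.range (n+1), (n.choose (j+1) : ℝ) * A (j+1) * B (n-j)
      + ((n+1).choose 0 : ℝ) * A 0 * B (n+1-0)
      = ∑ j ∈ Finset.range (n+1), (n.choose j : ℝ) * A j * B (n+1-j) := by
    have h4 := Finset.sum_range_succ' (fun j => (n.choose j : ℝ) * A j * B (n+1-j)) n
    have h5 : ∀ j ∈ Finset.range n, (n.choose (j+1) : ℝ) * A (j+1) * B (n+1-(j+1))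
        = (n.choose (j+1) : ℝ) * A (j+1) * B (n-j) := by
      intro j hj
      have : n+1-(j+1) = n-j := by omega
      rw [this]
    have h6 : ∑ j ∈ Finset.range (n+1), (n.choose (j+1) : ℝ) * A (j+1) * B (n-j)
        = ∑ j ∈ Finset.range n, (n.choose (j+1) : ℝ) * A (j+1) * B (n-j) := by
      rw [Finset.sum_range_succ]
      simp [Nat.choose_succ_self]
    rw [h6, h4]
    rw [Finset.sum_congr rfl h5]
    simp
  linarith [e3]

theorem leibniz {f g : ℝ → ℝ} (hf : ContDiff ℝ (⊤:ℕ∞) f) (hg : ContDiff ℝ (⊤:ℕ∞) g) (n : ℕ)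
    (x : ℝ) :
    iteratedDeriv n (fun y => f y * g y) x
      = ∑ j ∈ Finset.range (n+1),
          (n.choose j : ℝ) * iteratedDeriv j f x * iteratedDeriv (n-j) g x := by
  induction n generalizing x with
  | zero => simp
  | succ n ih =>
    have hfun : iteratedDeriv n (fun y => f y * g y)
        = fun y => ∑ j ∈ Finset.range (n+1),
            (n.choose j : ℝ) * iteratedDeriv j f y * iteratedDeriv (n-j) g y := funext ih
    rw [iteratedDeriv_succ, hfun]
    have hder : HasDerivAt (fun y => ∑ j ∈ Finset.range (n+1),
          (n.choose j : ℝ) * iteratedDeriv j f y * iteratedDeriv (n-j) g y)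
        (∑ j ∈ Finset.range (n+1), (n.choose j : ℝ) *
          (iteratedDeriv (j+1) f x * iteratedDeriv (n-j) g x
            + iteratedDeriv j f x * iteratedDeriv (n-j+1) g x)) x := by
      refine HasDerivAt.fun_sum fun j _ => ?_
      have h1 := (hasDerivAt_iteratedDeriv hf j x).fun_mul (hasDerivAt_iteratedDeriv hg (n-j) x)
      have h2 := h1.const_mul ((n.choose j : ℝ))
      exact h2.congr_of_eventuallyEq (Filter.Eventually.of_forall fun y => by ring)
    rw [hder.deriv]
    exact pascal_sum n (fun j => iteratedDeriv j f x) (fun j => iteratedDeriv j g x)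



/-- Gevrey weight `(n+1)^(nσ)`. -/
noncomputable def W (σ : ℝ) (n : ℕ) : ℝ := ((n : ℝ) + 1) ^ ((n : ℝ) * σ)

lemma W_pos (σ : ℝ) (n : ℕ) : 0 < W σ n := rpow_pos_of_pos (by positivity) _

lemma W_eq (σ : ℝ) (n : ℕ) : W σ n = (((n : ℝ) + 1) ^ n) ^ σ := by
  rw [W, ← Real.rpow_natCast ((n:ℝ)+1) n, ← Real.rpow_mul (by positivity)]

lemma one_le_W (σ : ℝ) (hσ : 0 ≤ σ) (n : ℕ) : 1 ≤ W σ n := by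
  rw [W]
  apply Real.one_le_rpow (by simp) (by positivity)

lemma pow_le_exp_mul_factorial (n : ℕ) :
    ((n : ℝ) + 1) ^ n ≤ Real.exp ((n : ℝ) + 1) * n.factorial := by
  have h1 : ((n:ℝ)+1) ^ n / n.factorial ≤ Real.exp ((n:ℝ)+1) := by
    have h2 := Real.sum_le_exp_of_nonneg (x := (n:ℝ)+1) (by positivity) (n+1)
    refine le_trans ?_ h2
    have : ((n:ℝ)+1)^n / n.factorial = ∑ i ∈ Finset.range (n+1),
        (if i = n then ((n:ℝ)+1)^i / i.factorial else 0) := by simp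
    rw [this]
    apply Finset.sum_le_sum
    intro i _
    split
    · rfl
    · positivity
  have hfac : (0:ℝ) < n.factorial := by positivity
  calc ((n:ℝ)+1)^n = ((n:ℝ)+1)^n / n.factorial * n.factorial := by field_simp
    _ ≤ Real.exp ((n:ℝ)+1) * n.factorial := by
        apply mul_le_mul_of_nonneg_right h1 hfac.le

/-- Key combinatorial inequality for Gevrey weights. -/
theorem key (σ : ℝ) (hσ : 1 ≤ σ) (p k j : ℕ) (hj : j ≤ k) :
    (k.choose j : ℝ) * W σ (p + j) * W σ (k - j)
      ≤ Real.exp σ ^ (k - j + 1) * W σ (p + k) := by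
  set d := k - j with hd
  -- the σ = 1 inequality with natural powers
  have base : (k.choose j : ℝ) * (((p:ℝ)+(j:ℝ)+1) ^ (p+j) * ((d:ℝ)+1) ^ d)
      ≤ Real.exp ((d:ℝ)+1) * ((p:ℝ)+(k:ℝ)+1) ^ (p+k) := by
    have h1 : ((d:ℝ)+1)^d ≤ Real.exp ((d:ℝ)+1) * d.factorial := pow_le_exp_mul_factorial d
    have h2 : (k.choose j : ℝ) * d.factorial ≤ ((p:ℝ)+(k:ℝ)+1) ^ d := by
      have hn : k.choose j * d.factorial ≤ k ^ d := by
        have : k.choose j = k.choose d := by rw [hd, Nat.choose_symm hj]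
        rw [this, mul_comm]
        rw [← Nat.descFactorial_eq_factorial_mul_choose]
        exact Nat.descFactorial_le_pow k d
      calc (k.choose j : ℝ) * d.factorial = ((k.choose j * d.factorial : ℕ) : ℝ) := by push_cast; ring
        _ ≤ ((k ^ d : ℕ) : ℝ) := by exact_mod_cast hn
        _ ≤ ((p:ℝ)+(k:ℝ)+1) ^ d := by
            push_cast
            apply pow_le_pow_left₀ (by positivity)
            linarith
    have h3 : ((p:ℝ)+(j:ℝ)+1) ^ (p+j) ≤ ((p:ℝ)+(k:ℝ)+1) ^ (p+j) := by
      apply pow_le_pow_left₀ (by positivity)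
      have : (j:ℝ) ≤ k := by exact_mod_cast hj
      linarith
    have hpk : p + j + d = p + k := by omega
    calc (k.choose j : ℝ) * (((p:ℝ)+(j:ℝ)+1) ^ (p+j) * ((d:ℝ)+1) ^ d)
        ≤ (k.choose j : ℝ) * (((p:ℝ)+(k:ℝ)+1) ^ (p+j) * (Real.exp ((d:ℝ)+1) * d.factorial)) := by
          apply mul_le_mul_of_nonneg_left _ (by positivity)
          exact mul_le_mul h3 h1 (by positivity) (by positivity)
      _ = Real.exp ((d:ℝ)+1) * (((p:ℝ)+(k:ℝ)+1) ^ (p+j) * ((k.choose j : ℝ) * d.factorial)) := by ring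
      _ ≤ Real.exp ((d:ℝ)+1) * (((p:ℝ)+(k:ℝ)+1) ^ (p+j) * ((p:ℝ)+(k:ℝ)+1) ^ d) := by
          apply mul_le_mul_of_nonneg_left _ (by positivity)
          apply mul_le_mul_of_nonneg_left h2 (by positivity)
      _ = Real.exp ((d:ℝ)+1) * ((p:ℝ)+(k:ℝ)+1) ^ (p+k) := by rw [← pow_add, hpk]
  -- raise to the power σ
  have hchoose1 : (1:ℝ) ≤ (k.choose j : ℝ) := by
    exact_mod_cast Nat.one_le_iff_ne_zero.mpr (Nat.choose_pos hj).ne'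
  have hσ0 : (0:ℝ) ≤ σ := le_trans zero_le_one hσ
  have lhs_le : (k.choose j : ℝ) * W σ (p + j) * W σ (k - j)
      ≤ ((k.choose j : ℝ) * (((p:ℝ)+(j:ℝ)+1) ^ (p+j) * ((d:ℝ)+1) ^ d)) ^ σ := by
    rw [W_eq, W_eq, ← hd]
    rw [Real.mul_rpow (by positivity) (by positivity),
      Real.mul_rpow (by positivity) (by positivity)]
    have hc : (k.choose j : ℝ) ≤ (k.choose j : ℝ) ^ σ := by
      nth_rewrite 1 [← Real.rpow_one (k.choose j : ℝ)]
      exact Real.rpow_le_rpow_of_exponent_le hchoose1 hσ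
    have hcast : ((p:ℝ)+(j:ℝ)+1) = (((p+j:ℕ):ℝ)+1) := by push_cast; ring
    rw [hcast, mul_assoc]
    apply mul_le_mul_of_nonneg_right hc (by positivity)
  have rhs_eq : (Real.exp ((d:ℝ)+1) * ((p:ℝ)+(k:ℝ)+1) ^ (p+k)) ^ σ
      = Real.exp σ ^ (d + 1) * W σ (p + k) := by
    rw [Real.mul_rpow (by positivity) (by positivity), W_eq]
    congr 1
    · rw [← Real.exp_mul, ← Real.exp_nat_mul]
      congr 1
      push_cast; ring
    · congr 2
      push_cast; ring
  calc (k.choose j : ℝ) * W σ (p + j) * W σ (k - j)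
      ≤ ((k.choose j : ℝ) * (((p:ℝ)+(j:ℝ)+1) ^ (p+j) * ((d:ℝ)+1) ^ d)) ^ σ := lhs_le
    _ ≤ (Real.exp ((d:ℝ)+1) * ((p:ℝ)+(k:ℝ)+1) ^ (p+k)) ^ σ :=
        Real.rpow_le_rpow (by positivity) base hσ0
    _ = Real.exp σ ^ (d + 1) * W σ (p + k) := rhs_eq

/-- geometric sum bound, full range. -/
theorem geom2 (E B : ℝ) (hB : 0 ≤ B) (hE : 0 ≤ E) (h : 2 * B ≤ E) (k : ℕ) :
    ∑ j ∈ Finset.range (k+1), E ^ j * B ^ (k - j) ≤ 2 * E ^ k := by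
  have hterm : ∀ j ∈ Finset.range (k+1), E ^ j * B ^ (k-j) ≤ E ^ k * (1/2) ^ (k-j) := by
    intro j hj
    rw [Finset.mem_range] at hj
    have hj' : j ≤ k := by omega
    have : B ^ (k-j) ≤ (E/2) ^ (k-j) := pow_le_pow_left₀ hB (by linarith) _
    calc E ^ j * B ^ (k-j) ≤ E ^ j * (E/2) ^ (k-j) :=
          mul_le_mul_of_nonneg_left this (by positivity)
      _ = E ^ j * E ^ (k-j) * (1/2) ^ (k-j) := by
          rw [div_pow, one_div, inv_pow]
          field_simp
      _ = E ^ k * (1/2) ^ (k-j) := by rw [← pow_add]; congr 2; omega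
  calc ∑ j ∈ Finset.range (k+1), E ^ j * B ^ (k - j)
      ≤ ∑ j ∈ Finset.range (k+1), E ^ k * (1/2) ^ (k-j) := Finset.sum_le_sum hterm
    _ = E ^ k * ∑ j ∈ Finset.range (k+1), (1/(2:ℝ)) ^ (k-j) := by rw [Finset.mul_sum]
    _ ≤ E ^ k * 2 := by
        apply mul_le_mul_of_nonneg_left _ (by positivity)
        have hr := Finset.sum_range_reflect (fun i => (1/(2:ℝ))^i) (k+1)
        have : ∑ j ∈ Finset.range (k+1), (1/(2:ℝ)) ^ (k-j)
            = ∑ j ∈ Finset.range (k+1), (1/(2:ℝ)) ^ (k+1-1-j) := by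
          apply Finset.sum_congr rfl; intro j hj; congr 1
        rw [this, hr]
        exact sum_geometric_two_le (k+1)
    _ = 2 * E ^ k := by ring

/-- geometric sum bound, reserving a factor. -/
theorem geom1 (E B : ℝ) (hB : 0 ≤ B) (hE : 0 ≤ E) (h : 2 * B ≤ E) (k : ℕ) (hk : 1 ≤ k) :
    ∑ j ∈ Finset.range k, E ^ j * B ^ (k - j) ≤ 2 * B * E ^ (k-1) := by
  obtain ⟨k', rfl⟩ : ∃ k', k = k' + 1 := ⟨k - 1, by omega⟩
  have : ∀ j ∈ Finset.range (k'+1), E ^ j * B ^ (k'+1-j) = B * (E ^ j * B ^ (k'-j)) := by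
    intro j hj
    rw [Finset.mem_range] at hj
    have : k' + 1 - j = (k' - j) + 1 := by omega
    rw [this, pow_succ]
    ring
  rw [Finset.sum_congr rfl this, ← Finset.mul_sum]
  have := geom2 E B hB hE h k'
  calc B * ∑ j ∈ Finset.range (k'+1), E ^ j * B ^ (k'-j) ≤ B * (2 * E ^ k') :=
        mul_le_mul_of_nonneg_left this hB
    _ = 2 * B * E ^ (k'+1-1) := by norm_num; ring

end GevAux

namespace GevAux

lemma W_succ_mono (σ : ℝ) (hσ : 0 ≤ σ) (n : ℕ) : W σ n ≤ W σ (n+1) := by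
  rw [W, W]
  have h1 : ((n:ℝ)+1) ^ ((n:ℝ)*σ) ≤ (((n+1:ℕ):ℝ)+1) ^ ((n:ℝ)*σ) := by
    apply Real.rpow_le_rpow (by positivity) (by push_cast; linarith) (by positivity)
  refine h1.trans ?_
  apply Real.rpow_le_rpow_of_exponent_le (by push_cast; linarith)
  push_cast
  nlinarith [hσ]

lemma iter_zero_fun : ∀ k : ℕ, iteratedDeriv k (fun _ : ℝ => (0:ℝ)) = fun _ => 0 := by
  intro k
  induction k with
  | zero => simp [iteratedDeriv_zero]
  | succ k ih =>
    rw [iteratedDeriv_succ', deriv_const']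
    exact ih

lemma iter_one_fun (k : ℕ) (hk : 1 ≤ k) :
    iteratedDeriv k (fun _ : ℝ => (1:ℝ)) = fun _ => 0 := by
  obtain ⟨k', rfl⟩ : ∃ k', k = k' + 1 := ⟨k - 1, by omega⟩
  rw [iteratedDeriv_succ', deriv_const']
  exact iter_zero_fun k'

lemma pow_rpow_comm (x : ℝ) (hx : 0 ≤ x) (n : ℕ) (σ : ℝ) : (x ^ n) ^ σ = (x ^ σ) ^ n := by
  rw [← Real.rpow_natCast x n, ← Real.rpow_mul hx, mul_comm, Real.rpow_mul hx, Real.rpow_natCast]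

/-- arithmetic bound converting the hypothesis Gevrey bound into the `W` form. -/
lemma deriv_b_arith (σ L : ℝ) (hσ : 1 ≤ σ) (hL : 1 ≤ L) (k : ℕ) :
    L ^ (k+1) * (((k:ℝ)+1)+1) ^ ((((k:ℕ):ℝ)+1)*σ)
      ≤ (L * (2:ℝ)^σ) * (L * ((2:ℝ)^σ * (2:ℝ)^σ)) ^ k * W σ k := by
  have hσ0 : (0:ℝ) ≤ σ := by linarith
  have hnat : ((k:ℝ)+2) ^ (k+1) ≤ (2:ℝ) ^ (2*k+1) * ((k:ℝ)+1) ^ k := by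
    have h1 : (k+2 : ℕ) ^ (k+1) ≤ 2 ^ (2*k+1) * (k+1) ^ k := by
      calc (k+2) ^ (k+1) ≤ (2*(k+1)) ^ (k+1) := Nat.pow_le_pow_left (by omega) _
        _ = 2 ^ (k+1) * ((k+1) * (k+1) ^ k) := by rw [Nat.mul_pow, pow_succ]; ring
        _ ≤ 2 ^ (k+1) * (2 ^ k * (k+1) ^ k) := by
            apply Nat.mul_le_mul_left
            apply Nat.mul_le_mul_right
            exact Nat.lt_two_pow_self
        _ = 2 ^ (2*k+1) * (k+1) ^ k := by ring
    calc ((k:ℝ)+2) ^ (k+1) = (((k+2 : ℕ) : ℝ)) ^ (k+1) := by push_cast; ring_nf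
      _ ≤ (( (2 ^ (2*k+1) * (k+1) ^ k : ℕ) : ℝ)) := by
          rw [← Nat.cast_pow]; exact_mod_cast h1
      _ = (2:ℝ) ^ (2*k+1) * ((k:ℝ)+1) ^ k := by push_cast; ring
  have hrw : (((k:ℝ)+1)+1) ^ ((((k:ℕ):ℝ)+1)*σ) = (((k:ℝ)+2) ^ (k+1)) ^ σ := by
    rw [← Real.rpow_natCast ((k:ℝ)+2) (k+1), ← Real.rpow_mul (by positivity)]
    congr 1
    · ring
    · push_cast; ring
  have hmid : (((k:ℝ)+2) ^ (k+1)) ^ σ ≤ ((2:ℝ)^(2*k+1) * ((k:ℝ)+1)^k) ^ σ :=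
    Real.rpow_le_rpow (by positivity) hnat hσ0
  have hsplit : ((2:ℝ)^(2*k+1) * ((k:ℝ)+1)^k) ^ σ
      = (2:ℝ)^σ * ((2:ℝ)^σ * (2:ℝ)^σ)^k * W σ k := by
    rw [Real.mul_rpow (by positivity) (by positivity), ← W_eq]
    congr 1
    rw [pow_rpow_comm (2:ℝ) (by norm_num) (2*k+1) σ]
    rw [pow_add, pow_mul, pow_one, sq]
    ring
  calc L ^ (k+1) * (((k:ℝ)+1)+1) ^ ((((k:ℕ):ℝ)+1)*σ)
      = L ^ (k+1) * (((k:ℝ)+2) ^ (k+1)) ^ σ := by rw [hrw]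
    _ ≤ L ^ (k+1) * ((2:ℝ)^σ * ((2:ℝ)^σ * (2:ℝ)^σ)^k * W σ k) := by
        apply mul_le_mul_of_nonneg_left (hmid.trans_eq hsplit) (by positivity)
    _ = (L * (2:ℝ)^σ) * (L * ((2:ℝ)^σ * (2:ℝ)^σ)) ^ k * W σ k := by
        rw [mul_pow]; ring

/-- the sequence of functions representing derivatives of the inverse. -/
noncomputable def Fseq (rf : ℝ → ℝ) : ℕ → ℝ → ℝ
  | 0 => rf
  | (n+1) => fun y => deriv (Fseq rf n) y * rf y

lemma Fseq_smooth {rf : ℝ → ℝ} (hrf : ContDiff ℝ (⊤:ℕ∞) rf) (n : ℕ) :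
    ContDiff ℝ (⊤:ℕ∞) (Fseq rf n) := by
  induction n with
  | zero => exact hrf
  | succ n ih =>
    have hd : ContDiff ℝ (⊤:ℕ∞) (deriv (Fseq rf n)) := (contDiff_infty_iff_deriv.mp ih).2
    exact hd.mul hrf

end GevAux

open GevAux in
set_option maxHeartbeats 1000000 in
theorem gevrey_inverse_function (s L ϑ : ℝ) (hs : s ∈ Set.Ioo (0 : ℝ) 1) (hL : 1 ≤ L)
    (hϑ : 0 < ϑ) :
    ∃ M : ℝ, 0 < M ∧ ∀ (a c : ℝ) (b : ℝ → ℝ),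
      ContDiff ℝ (⊤ : ℕ∞) b →
      (∀ y : ℝ, ϑ ≤ deriv b y) →
      (∀ (m : ℕ), 1 ≤ m → ∀ y ∈ Set.Ioo a c,
        |iteratedDeriv m b y| ≤ L ^ m * ((m : ℝ) + 1) ^ ((m : ℝ) / s)) →
      ∀ (m : ℕ), 1 ≤ m → ∀ x ∈ b '' Set.Ioo a c,
        |iteratedDerivWithin m (Function.invFun b) (b '' Set.Ioo a c) x| ≤
          M ^ m * ((m : ℝ) + 1) ^ ((m : ℝ) / s) := by
  obtain ⟨hs0, hs1⟩ := hs
  set σ := s⁻¹ with hσdef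
  have hσ1 : 1 ≤ σ := by
    rw [hσdef]
    rw [le_inv_comm₀ one_pos hs0]
    simpa using hs1.le
  have hσ0 : (0:ℝ) ≤ σ := by linarith
  set A := L * (2:ℝ)^σ with hAdef
  set B := L * ((2:ℝ)^σ * (2:ℝ)^σ) with hBdef
  set eσ := Real.exp σ with heσdef
  set E := 2*A*B*Real.exp (2*σ)*(1+ϑ⁻¹) with hEdef
  set R := 2*E*eσ with hRdef
  set Q := 2*R*eσ*(1+ϑ⁻¹) with hQdef
  set M := Q*(1+ϑ⁻¹) with hMdef
  have mul1 : ∀ x y : ℝ, 1 ≤ x → 1 ≤ y → 1 ≤ x*y := fun x y hx hy => by nlinarith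
  have h2pow : (1:ℝ) ≤ (2:ℝ)^σ := Real.one_le_rpow one_le_two hσ0
  have hA1 : 1 ≤ A := by rw [hAdef]; exact mul1 _ _ hL h2pow
  have hB1 : 1 ≤ B := by rw [hBdef]; exact mul1 _ _ hL (mul1 _ _ h2pow h2pow)
  have he1 : 1 ≤ eσ := Real.one_le_exp hσ0
  have h2σexp : Real.exp (2*σ) = eσ*eσ := by rw [two_mul, Real.exp_add]
  have hϑi : 0 < ϑ⁻¹ := by positivity
  have hϑ1 : 1 ≤ 1 + ϑ⁻¹ := by linarith
  have hA0 : (0:ℝ) < A := lt_of_lt_of_le one_pos hA1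
  have hB0 : (0:ℝ) < B := lt_of_lt_of_le one_pos hB1
  have he0 : (0:ℝ) < eσ := lt_of_lt_of_le one_pos he1
  have hE1 : 1 ≤ E := by
    rw [hEdef, h2σexp]
    have := mul1 _ _ (mul1 _ _ (mul1 _ _ (by linarith : (1:ℝ) ≤ 2*A) hB1)
      (mul1 _ _ he1 he1)) hϑ1
    calc (1:ℝ) ≤ 2*A*B*(eσ*eσ)*(1+ϑ⁻¹) := this
      _ = 2*A*B*(eσ*eσ)*(1+ϑ⁻¹) := rfl
  have hE0 : (0:ℝ) < E := lt_of_lt_of_le one_pos hE1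
  have hgeom_h : 2*(B*eσ) ≤ E := by
    have hid : E = (2*(B*eσ)) * (A*(eσ*(1+ϑ⁻¹))) := by rw [hEdef, h2σexp]; ring
    rw [hid]
    exact le_mul_of_one_le_right (by positivity) (mul1 _ _ hA1 (mul1 _ _ he1 hϑ1))
  have hEcond : ϑ⁻¹*(A*eσ*(2*(B*eσ))) ≤ E := by
    have hid : E = ϑ⁻¹*(A*eσ*(2*(B*eσ))) + 2*A*B*(eσ*eσ) := by rw [hEdef, h2σexp]; ring
    have hpos : (0:ℝ) ≤ 2*A*B*(eσ*eσ) := by positivity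
    linarith
  have hgeom_F : 2*(E*eσ) ≤ R := le_of_eq (by rw [hRdef]; ring)
  have hER : E ≤ R := by
    rw [hRdef]
    nlinarith
  have hR1 : 1 ≤ R := by linarith
  have hR0 : (0:ℝ) < R := lt_of_lt_of_le one_pos hR1
  have hQcond : ϑ⁻¹*(eσ*R*2) ≤ Q := by
    have hid : Q = ϑ⁻¹*(eσ*R*2) + 2*R*eσ := by rw [hQdef]; ring
    have hpos : (0:ℝ) ≤ 2*R*eσ := by positivity
    linarith
  have hQ1 : 1 ≤ Q := by
    rw [hQdef]
    exact mul1 _ _ (mul1 _ _ (by linarith : (1:ℝ) ≤ 2*R) he1) hϑ1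
  have hQ0 : (0:ℝ) < Q := lt_of_lt_of_le one_pos hQ1
  have hQM : Q ≤ M := by
    rw [hMdef]
    exact le_mul_of_one_le_right (by positivity) hϑ1
  have hϑM : ϑ⁻¹ ≤ M := by
    rw [hMdef]
    nlinarith
  have hM1 : 1 ≤ M := by linarith
  clear_value σ A B eσ E R Q M
  refine ⟨M, by linarith, ?_⟩
  intro a c b hb hb' hbnd
  have hb8 : ContDiff ℝ (⊤:ℕ∞) b := hb.of_le (by simp)
  have hpos : ∀ y, 0 < deriv b y := fun y => lt_of_lt_of_le hϑ (hb' y)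
  have hne : ∀ y, deriv b y ≠ 0 := fun y => (hpos y).ne'
  have hbderiv : ContDiff ℝ (⊤:ℕ∞) (deriv b) := (contDiff_infty_iff_deriv.mp hb8).2
  set rf : ℝ → ℝ := fun y => (deriv b y)⁻¹ with hrfdef
  have hrf : ContDiff ℝ (⊤:ℕ∞) rf := hbderiv.inv hne
  have habs_rf : ∀ y, |rf y| ≤ ϑ⁻¹ := by
    intro y
    have h0 : (0:ℝ) < (deriv b y)⁻¹ := by
      have := hpos y; positivity
    rw [hrfdef]
    simp only []
    rw [abs_of_pos h0]
    exact inv_anti₀ hϑ (hb' y)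
  have hb'bd : ∀ k, ∀ y ∈ Set.Ioo a c, |iteratedDeriv k (deriv b) y| ≤ A * B^k * W σ k := by
    intro k y hy
    have h1 := hbnd (k+1) (by omega) y hy
    have h2 : iteratedDeriv k (deriv b) y = iteratedDeriv (k+1) b y := by
      rw [iteratedDeriv_succ']
    rw [h2]
    refine h1.trans ?_
    have hexp : (((k+1:ℕ)):ℝ)/s = (((k:ℕ):ℝ)+1)*σ := by
      rw [hσdef, div_eq_mul_inv]
      push_cast
      ring
    have hbase : (((k+1:ℕ)):ℝ)+1 = ((k:ℝ)+1)+1 := by push_cast; ring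
    rw [hexp, hbase]
    rw [hAdef, hBdef]
    exact deriv_b_arith σ L hσ1 hL k
  have hrfbd : ∀ k, ∀ y ∈ Set.Ioo a c, |iteratedDeriv k rf y| ≤ ϑ⁻¹ * E^k * W σ k := by
    intro k
    induction k using Nat.strong_induction_on with
    | _ k ih =>
      cases k with
      | zero =>
        intro y hy
        have : W σ 0 = 1 := by
          rw [W]; norm_num
        rw [this, iteratedDeriv_zero, pow_zero]
        simpa using habs_rf y
      | succ k =>
        intro y hy
        have hone : (fun z => rf z * deriv b z) = fun _ => (1:ℝ) := by
          funext z
          exact inv_mul_cancel₀ (hne z)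
        have hzero : iteratedDeriv (k+1) (fun z => rf z * deriv b z) y = 0 := by
          rw [hone, iter_one_fun (k+1) (by omega)]
        have hlei := leibniz hrf hbderiv (k+1) y
        rw [hzero, Finset.sum_range_succ] at hlei
        simp only [Nat.choose_self, Nat.cast_one, one_mul, Nat.sub_self,
          iteratedDeriv_zero] at hlei
        have hexpr : iteratedDeriv (k+1) rf y * deriv b y
            = -∑ j ∈ Finset.range (k+1), ((k+1).choose j : ℝ) * iteratedDeriv j rf y
                * iteratedDeriv (k+1-j) (deriv b) y := by linarith [hlei]
        have hWk1 : 0 < W σ (k+1) := W_pos σ (k+1)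
        have hterm : ∀ j ∈ Finset.range (k+1),
            |((k+1).choose j : ℝ) * iteratedDeriv j rf y * iteratedDeriv (k+1-j) (deriv b) y|
              ≤ ϑ⁻¹*A*eσ*W σ (k+1) * (E^j * (B*eσ)^(k+1-j)) := by
          intro j hj
          rw [Finset.mem_range] at hj
          have hj' : j ≤ k+1 := by omega
          have h1 : |iteratedDeriv j rf y| ≤ ϑ⁻¹*E^j*W σ j := ih j (by omega) y hy
          have h2 : |iteratedDeriv (k+1-j) (deriv b) y| ≤ A*B^(k+1-j)*W σ (k+1-j) :=
            hb'bd _ y hy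
          have hkey := key σ hσ1 0 (k+1) j hj'
          simp only [Nat.zero_add] at hkey
          rw [← heσdef] at hkey
          have hC0 : (0:ℝ) ≤ ((k+1).choose j : ℝ) := Nat.cast_nonneg _
          have hWj : 0 < W σ j := W_pos σ j
          have hWkj : 0 < W σ (k+1-j) := W_pos σ (k+1-j)
          calc |((k+1).choose j : ℝ) * iteratedDeriv j rf y
                * iteratedDeriv (k+1-j) (deriv b) y|
              = ((k+1).choose j : ℝ) * |iteratedDeriv j rf y|
                * |iteratedDeriv (k+1-j) (deriv b) y| := by
                rw [abs_mul, abs_mul, abs_of_nonneg hC0]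
            _ ≤ ((k+1).choose j : ℝ) * (ϑ⁻¹*E^j*W σ j) * (A*B^(k+1-j)*W σ (k+1-j)) := by
                apply mul_le_mul _ h2 (abs_nonneg _) _
                · exact mul_le_mul_of_nonneg_left h1 hC0
                · have : (0:ℝ) ≤ ϑ⁻¹*E^j*W σ j := by positivity
                  positivity
            _ = (ϑ⁻¹*E^j)*(A*B^(k+1-j))
                *(((k+1).choose j : ℝ) * W σ j * W σ (k+1-j)) := by ring
            _ ≤ (ϑ⁻¹*E^j)*(A*B^(k+1-j))*(eσ^(k+1-j+1) * W σ (k+1)) := by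
                apply mul_le_mul_of_nonneg_left hkey
                have : (0:ℝ) ≤ B^(k+1-j) := by positivity
                positivity
            _ = ϑ⁻¹*A*eσ*W σ (k+1) * (E^j * (B*eσ)^(k+1-j)) := by
                rw [mul_pow, pow_succ]
                ring
        have hfac : (0:ℝ) ≤ ϑ⁻¹*A*eσ*W σ (k+1) := by positivity
        have hsum : |∑ j ∈ Finset.range (k+1), ((k+1).choose j : ℝ) * iteratedDeriv j rf y
              * iteratedDeriv (k+1-j) (deriv b) y|
            ≤ ϑ⁻¹*A*eσ*W σ (k+1) * (2*(B*eσ)*E^k) := by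
          calc |∑ j ∈ Finset.range (k+1), ((k+1).choose j : ℝ) * iteratedDeriv j rf y
                * iteratedDeriv (k+1-j) (deriv b) y|
              ≤ ∑ j ∈ Finset.range (k+1), |((k+1).choose j : ℝ) * iteratedDeriv j rf y
                * iteratedDeriv (k+1-j) (deriv b) y| := Finset.abs_sum_le_sum_abs _ _
            _ ≤ ∑ j ∈ Finset.range (k+1), ϑ⁻¹*A*eσ*W σ (k+1) * (E^j * (B*eσ)^(k+1-j)) :=
                Finset.sum_le_sum hterm
            _ = ϑ⁻¹*A*eσ*W σ (k+1) * ∑ j ∈ Finset.range (k+1), E^j * (B*eσ)^(k+1-j) := by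
                rw [Finset.mul_sum]
            _ ≤ ϑ⁻¹*A*eσ*W σ (k+1) * (2*(B*eσ)*E^(k+1-1)) := by
                apply mul_le_mul_of_nonneg_left _ hfac
                exact geom1 E (B*eσ) (by positivity) (by positivity) hgeom_h (k+1) (by omega)
            _ = ϑ⁻¹*A*eσ*W σ (k+1) * (2*(B*eσ)*E^k) := by norm_num
        have habs_eq : |iteratedDeriv (k+1) rf y| * deriv b y
            = |∑ j ∈ Finset.range (k+1), ((k+1).choose j : ℝ) * iteratedDeriv j rf y
                * iteratedDeriv (k+1-j) (deriv b) y| := by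
          conv_lhs => rw [← abs_of_pos (hpos y)]
          rw [← abs_mul, hexpr, abs_neg]
        have hstep : |iteratedDeriv (k+1) rf y|
            ≤ ϑ⁻¹ * (ϑ⁻¹*A*eσ*W σ (k+1) * (2*(B*eσ)*E^k)) := by
          have hby := hb' y
          have h5 : |iteratedDeriv (k+1) rf y| * ϑ ≤ |iteratedDeriv (k+1) rf y| * deriv b y :=
            mul_le_mul_of_nonneg_left hby (abs_nonneg _)
          rw [habs_eq] at h5
          have h6 := h5.trans hsum
          rw [← le_div_iff₀ hϑ] at h6
          rw [div_eq_inv_mul] at h6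
          exact h6
        refine hstep.trans ?_
        have h7 : ϑ⁻¹*(A*eσ*(2*(B*eσ))) * E^k ≤ E * E^k :=
          mul_le_mul_of_nonneg_right hEcond (by positivity)
        calc ϑ⁻¹ * (ϑ⁻¹*A*eσ*W σ (k+1) * (2*(B*eσ)*E^k))
            = (ϑ⁻¹ * W σ (k+1)) * (ϑ⁻¹*(A*eσ*(2*(B*eσ))) * E^k) := by ring
          _ ≤ (ϑ⁻¹ * W σ (k+1)) * (E * E^k) := by
              apply mul_le_mul_of_nonneg_left h7 (by positivity)
          _ = ϑ⁻¹ * E^(k+1) * W σ (k+1) := by rw [pow_succ]; ring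
  have hFs : ∀ n, ContDiff ℝ (⊤:ℕ∞) (Fseq rf n) := Fseq_smooth hrf
  have hFbd : ∀ m k, ∀ y ∈ Set.Ioo a c,
      |iteratedDeriv k (Fseq rf m) y| ≤ ϑ⁻¹ * Q^m * R^k * W σ (m+k) := by
    intro m
    induction m with
    | zero =>
      intro k y hy
      have h0 := hrfbd k y hy
      have hE' : E^k ≤ R^k := pow_le_pow_left₀ (by positivity) hER k
      have hW : 0 < W σ k := W_pos σ k
      calc |iteratedDeriv k (Fseq rf 0) y| = |iteratedDeriv k rf y| := rfl
        _ ≤ ϑ⁻¹ * E^k * W σ k := h0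
        _ ≤ ϑ⁻¹ * R^k * W σ k := by
            apply mul_le_mul_of_nonneg_right _ hW.le
            exact mul_le_mul_of_nonneg_left hE' hϑi.le
        _ = ϑ⁻¹ * Q^0 * R^k * W σ (0+k) := by rw [pow_zero, Nat.zero_add]; ring
    | succ m ihm =>
      intro k y hy
      have hdF : ContDiff ℝ (⊤:ℕ∞) (deriv (Fseq rf m)) :=
        (contDiff_infty_iff_deriv.mp (hFs m)).2
      have hFe : iteratedDeriv k (Fseq rf (m+1)) y
          = ∑ j ∈ Finset.range (k+1), (k.choose j : ℝ)
              * iteratedDeriv j (deriv (Fseq rf m)) y * iteratedDeriv (k-j) rf y := by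
        rw [show Fseq rf (m+1) = fun z => deriv (Fseq rf m) z * rf z from rfl]
        exact leibniz hdF hrf k y
      have hWmk : 0 < W σ (m+1+k) := W_pos σ (m+1+k)
      have hterm : ∀ j ∈ Finset.range (k+1),
          |(k.choose j : ℝ) * iteratedDeriv j (deriv (Fseq rf m)) y
            * iteratedDeriv (k-j) rf y|
            ≤ ϑ⁻¹*Q^m*W σ (m+1+k)*(ϑ⁻¹*eσ*R) * (R^j * (E*eσ)^(k-j)) := by
        intro j hj
        rw [Finset.mem_range] at hj
        have hj' : j ≤ k := by omega
        have h1 : |iteratedDeriv j (deriv (Fseq rf m)) y|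
            ≤ ϑ⁻¹ * Q^m * R^(j+1) * W σ (m+1+j) := by
          have he : m + (j+1) = m+1+j := by omega
          have h0 := ihm (j+1) y hy
          rw [he] at h0
          rw [← iteratedDeriv_succ']
          exact h0
        have h2 : |iteratedDeriv (k-j) rf y| ≤ ϑ⁻¹*E^(k-j)*W σ (k-j) := hrfbd _ y hy
        have hkey := key σ hσ1 (m+1) k j hj'
        rw [← heσdef] at hkey
        have hC0 : (0:ℝ) ≤ (k.choose j : ℝ) := Nat.cast_nonneg _
        have hWa : 0 < W σ (m+1+j) := W_pos σ (m+1+j)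
        have hWb : 0 < W σ (k-j) := W_pos σ (k-j)
        calc |(k.choose j : ℝ) * iteratedDeriv j (deriv (Fseq rf m)) y
              * iteratedDeriv (k-j) rf y|
            = (k.choose j : ℝ) * |iteratedDeriv j (deriv (Fseq rf m)) y|
              * |iteratedDeriv (k-j) rf y| := by rw [abs_mul, abs_mul, abs_of_nonneg hC0]
          _ ≤ (k.choose j : ℝ) * (ϑ⁻¹ * Q^m * R^(j+1) * W σ (m+1+j))
              * (ϑ⁻¹*E^(k-j)*W σ (k-j)) := by
              apply mul_le_mul _ h2 (abs_nonneg _) _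
              · exact mul_le_mul_of_nonneg_left h1 hC0
              · have : (0:ℝ) ≤ ϑ⁻¹ * Q^m * R^(j+1) := by positivity
                positivity
          _ = (ϑ⁻¹ * Q^m * R^(j+1))*(ϑ⁻¹*E^(k-j))
              *((k.choose j : ℝ) * W σ (m+1+j) * W σ (k-j)) := by ring
          _ ≤ (ϑ⁻¹ * Q^m * R^(j+1))*(ϑ⁻¹*E^(k-j))*(eσ^(k-j+1) * W σ (m+1+k)) := by
              apply mul_le_mul_of_nonneg_left hkey
              have : (0:ℝ) ≤ E^(k-j) := by positivity
              positivity
          _ = ϑ⁻¹*Q^m*W σ (m+1+k)*(ϑ⁻¹*eσ*R) * (R^j * (E*eσ)^(k-j)) := by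
              rw [mul_pow, pow_succ eσ (k-j), pow_succ R j]
              ring
      have hfac : (0:ℝ) ≤ ϑ⁻¹*Q^m*W σ (m+1+k)*(ϑ⁻¹*eσ*R) := by positivity
      have hsum : |iteratedDeriv k (Fseq rf (m+1)) y|
          ≤ ϑ⁻¹*Q^m*W σ (m+1+k)*(ϑ⁻¹*eσ*R) * (2*R^k) := by
        rw [hFe]
        calc |∑ j ∈ Finset.range (k+1), (k.choose j : ℝ)
              * iteratedDeriv j (deriv (Fseq rf m)) y * iteratedDeriv (k-j) rf y|
            ≤ ∑ j ∈ Finset.range (k+1), |(k.choose j : ℝ)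
              * iteratedDeriv j (deriv (Fseq rf m)) y * iteratedDeriv (k-j) rf y| :=
              Finset.abs_sum_le_sum_abs _ _
          _ ≤ ∑ j ∈ Finset.range (k+1),
              ϑ⁻¹*Q^m*W σ (m+1+k)*(ϑ⁻¹*eσ*R) * (R^j * (E*eσ)^(k-j)) :=
              Finset.sum_le_sum hterm
          _ = ϑ⁻¹*Q^m*W σ (m+1+k)*(ϑ⁻¹*eσ*R)
              * ∑ j ∈ Finset.range (k+1), R^j * (E*eσ)^(k-j) := by rw [Finset.mul_sum]
          _ ≤ ϑ⁻¹*Q^m*W σ (m+1+k)*(ϑ⁻¹*eσ*R) * (2*R^k) := by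
              apply mul_le_mul_of_nonneg_left _ hfac
              exact geom2 R (E*eσ) (by positivity) (by positivity) hgeom_F k
      refine hsum.trans ?_
      have h7 : ϑ⁻¹*(eσ*R*2) * R^k ≤ Q * R^k :=
        mul_le_mul_of_nonneg_right hQcond (by positivity)
      calc ϑ⁻¹*Q^m*W σ (m+1+k)*(ϑ⁻¹*eσ*R) * (2*R^k)
          = (ϑ⁻¹*Q^m*W σ (m+1+k)) * (ϑ⁻¹*(eσ*R*2) * R^k) := by ring
        _ ≤ (ϑ⁻¹*Q^m*W σ (m+1+k)) * (Q * R^k) := by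
            apply mul_le_mul_of_nonneg_left h7
            positivity
        _ = ϑ⁻¹ * Q^(m+1) * R^k * W σ (m+1+k) := by rw [pow_succ]; ring
  -- inverse function facts
  have hmono : StrictMono b := strictMono_of_deriv_pos hpos
  have hbdiff : Differentiable ℝ b := hb8.differentiable (lt_of_lt_of_le zero_lt_one infty_le).ne'
  have hsurj : Function.Surjective b := by
    intro z
    have hlin : ∀ x:ℝ, DifferentiableAt ℝ (fun y : ℝ => ϑ*y) x :=
      fun x => differentiableAt_id.const_mul ϑ
    have hφdiff : Differentiable ℝ (fun y => b y - ϑ*y) :=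
      fun x => (hbdiff x).sub (hlin x)
    have hφd : ∀ x, deriv (fun y => b y - ϑ*y) x = deriv b x - ϑ := by
      intro x
      have h1 : HasDerivAt (fun y => b y - ϑ*y) (deriv b x - ϑ*1) x :=
        (hbdiff x).hasDerivAt.sub ((hasDerivAt_id x).const_mul ϑ)
      simpa using h1.deriv
    have hφmono : Monotone (fun y => b y - ϑ*y) := by
      apply monotone_of_deriv_nonneg hφdiff
      intro x
      rw [hφd x]
      have := hb' x
      linarith
    set u := (|z - b 0| + 1)/ϑ with hudef
    have hu0 : 0 < u := by positivity
    have huv : ϑ * u = |z - b 0| + 1 := by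
      rw [hudef]; field_simp
    have habs1 := le_abs_self (z - b 0)
    have habs2 := neg_abs_le (z - b 0)
    have h2 : z ≤ b u := by
      have hm := hφmono (le_of_lt hu0)
      simp only [mul_zero, sub_zero] at hm
      -- hm : b 0 - ϑ*0 ≤ b u - ϑ*u
      have : b 0 ≤ b u - ϑ*u := by simpa using hm
      rw [huv] at this
      linarith
    have h1 : b (-u) ≤ z := by
      have hm := hφmono (show -u ≤ 0 by linarith)
      have : b (-u) - ϑ*(-u) ≤ b 0 := by simpa using hm
      have h3 : b (-u) ≤ b 0 - ϑ*u := by linarith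
      rw [huv] at h3
      linarith
    have hiv := intermediate_value_Icc (show -u ≤ u by linarith)
      (hb8.continuous.continuousOn (s := Set.Icc (-u) u))
    have hz : z ∈ Set.Icc (b (-u)) (b u) := ⟨h1, h2⟩
    obtain ⟨y, _, hy⟩ := hiv hz
    exact ⟨y, hy⟩
  set e : ℝ ≃o ℝ := StrictMono.orderIsoOfSurjective b hmono hsurj with hedef
  have hecoe : ⇑e = b := StrictMono.coe_orderIsoOfSurjective b hmono hsurj
  have hbg : ∀ x, b (Function.invFun b x) = x := fun x => Function.invFun_eq (hsurj x)
  have hgb : ∀ y, Function.invFun b (b y) = y := fun y => hmono.injective (hbg (b y))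
  have hinv : Function.invFun b = ⇑e.symm := by
    funext x
    apply hmono.injective
    rw [hbg x]
    have : b (e.symm x) = e (e.symm x) := by rw [hecoe]
    rw [this, OrderIso.apply_symm_apply]
  have hgcont : Continuous (Function.invFun b) := by
    rw [hinv]; exact OrderIso.continuous e.symm
  have hJopen : IsOpen (b '' Set.Ioo a c) := by
    have h1 := (OrderIso.toHomeomorph e).isOpenMap (Set.Ioo a c) isOpen_Ioo
    have h2 : (OrderIso.toHomeomorph e) '' (Set.Ioo a c) = b '' Set.Ioo a c := by
      have : ⇑(OrderIso.toHomeomorph e) = ⇑e := rfl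
      rw [this, hecoe]
    rwa [h2] at h1
  have hgderiv : ∀ x, HasDerivAt (Function.invFun b) (rf (Function.invFun b x)) x := by
    intro x
    have hbd : HasDerivAt b (deriv b (Function.invFun b x)) (Function.invFun b x) :=
      (hbdiff _).hasDerivAt
    exact HasDerivAt.of_local_left_inverse hgcont.continuousAt hbd (hne _)
      (Filter.Eventually.of_forall hbg)
  have hgiter : ∀ n x, iteratedDeriv (n+1) (Function.invFun b) x
      = Fseq rf n (Function.invFun b x) := by
    intro n
    induction n with
    | zero =>
      intro x
      rw [iteratedDeriv_one]
      exact (hgderiv x).deriv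
    | succ n ihn =>
      intro x
      rw [iteratedDeriv_succ]
      have hfn : iteratedDeriv (n+1) (Function.invFun b)
          = fun z => Fseq rf n (Function.invFun b z) := funext ihn
      rw [hfn]
      have hFd : HasDerivAt (Fseq rf n) (deriv (Fseq rf n) (Function.invFun b x))
          (Function.invFun b x) := (((hFs n).differentiable (lt_of_lt_of_le zero_lt_one infty_le).ne') _).hasDerivAt
      have hcomp := hFd.comp x (hgderiv x)
      have : deriv (fun z => Fseq rf n (Function.invFun b z)) x
          = deriv (Fseq rf n) (Function.invFun b x) * rf (Function.invFun b x) := hcomp.deriv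
      rw [this]
      rfl
  -- conclusion
  intro m hm x hx
  obtain ⟨y, hy, rfl⟩ := hx
  obtain ⟨m', rfl⟩ : ∃ m', m = m'+1 := ⟨m-1, by omega⟩
  have hmem : b y ∈ b '' Set.Ioo a c := ⟨y, hy, rfl⟩
  have hWithin : iteratedDerivWithin (m'+1) (Function.invFun b) (b '' Set.Ioo a c) (b y)
      = iteratedDeriv (m'+1) (Function.invFun b) (b y) := by
    rw [iteratedDerivWithin_eq_iteratedFDerivWithin,
      iteratedFDerivWithin_of_isOpen _ hJopen hmem, iteratedDeriv_eq_iteratedFDeriv]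
  rw [hWithin, hgiter m' (b y), hgb y]
  have hbound := hFbd m' 0 y hy
  rw [iteratedDeriv_zero] at hbound
  simp only [pow_zero, mul_one, Nat.add_zero] at hbound
  refine hbound.trans ?_
  have htgt : (((m'+1:ℕ):ℝ) + 1) ^ (((m'+1:ℕ):ℝ)/s) = W σ (m'+1) := by
    rw [W, hσdef]
    congr 1
  rw [htgt]
  have hWm : W σ m' ≤ W σ (m'+1) := W_succ_mono σ hσ0 m'
  have hWp : 0 < W σ m' := W_pos σ m'
  have hQm : Q^m' ≤ M^m' := pow_le_pow_left₀ hQ0.le hQM m'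
  have hfinal : ϑ⁻¹ * Q^m' ≤ M^(m'+1) := by
    calc ϑ⁻¹ * Q^m' ≤ M * M^m' := by
          apply mul_le_mul hϑM hQm (by positivity) (by linarith)
      _ = M^(m'+1) := by rw [pow_succ]; ring
  calc ϑ⁻¹ * Q^m' * W σ m' ≤ (ϑ⁻¹ * Q^m') * W σ (m'+1) := by
        apply mul_le_mul_of_nonneg_left hWm (by positivity)
    _ ≤ M^(m'+1) * W σ (m'+1) := by
        apply mul_le_mul_of_nonneg_right hfinal (W_pos σ (m'+1)).le
end

section
/- Let k be a nonzero integer and define G'_k(y,z) = −k·cosh(k(1−z))·cosh(ky)/sinh(k) for 0 ≤ y ≤ z ≤ 1 and G'_k(y,z) = −k·cosh(kz)·cosh(k(1−y))/sinh(k) for 0 ≤ z < y ≤ 1. Then sup_{y∈[0,1]} ∫₀¹ |G'_k(y,z)| dz ≤ C for an absolute constant C independent of k. -/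
/-!
Since `k / sinh k ≥ 0`, the kernel `G'_k(y, ·)` is nonpositive, so its `L¹` norm is minus its
integral. On `[0, y]` and `[y, 1]` the kernel is a multiple of `k cosh(k z)` resp. `k cosh(k(1 - z))`,
whose primitives are hyperbolic sines, and the addition formula for `sinh` collapses the sum of the
two pieces to `-sinh k / sinh k = -1`. Hence `∫₀¹ |G'_k(y, z)| dz = 1` for every `y` and `k ≠ 0`.
-/

noncomputable def GreenG' (k : ℤ) (y z : ℝ) : ℝ :=
  if y ≤ z then -(k : ℝ) * Real.cosh ((k : ℝ) * (1 - z)) * Real.cosh ((k : ℝ) * y) / Real.sinh (k : ℝ)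
  else -(k : ℝ) * Real.cosh ((k : ℝ) * z) * Real.cosh ((k : ℝ) * (1 - y)) / Real.sinh (k : ℝ)

open Real Set intervalIntegral

lemma div_sinh_nonneg (x : ℝ) : 0 ≤ x / sinh x := by
  rcases le_total 0 x with hx | hx
  · exact div_nonneg hx (sinh_nonneg_iff.mpr hx)
  · exact div_nonneg_of_nonpos hx (sinh_nonpos_iff.mpr hx)

lemma integral_mul_cosh_mul (c a b : ℝ) :
    ∫ x in a..b, c * cosh (c * x) = sinh (c * b) - sinh (c * a) := by
  refine integral_eq_sub_of_hasDerivAt (f := fun x => sinh (c * x)) (fun x _ => ?_)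
    ((by fun_prop : Continuous fun x => c * cosh (c * x)).intervalIntegrable a b)
  simpa [mul_comm] using ((hasDerivAt_id x).const_mul c).sinh

lemma integral_mul_cosh_mul_sub (c d a b : ℝ) :
    ∫ x in a..b, c * cosh (c * (d - x)) = sinh (c * (d - a)) - sinh (c * (d - b)) :=
  (integral_comp_sub_left (fun x => c * cosh (c * x)) d).trans (integral_mul_cosh_mul c _ _)

section GreenG'

variable {k : ℤ} {y z : ℝ}

lemma GreenG'_of_le (h : y ≤ z) :
    GreenG' k y z = -(cosh (k * y) / sinh k) * (k * cosh (k * (1 - z))) := by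
  rw [GreenG', if_pos h]
  ring

lemma GreenG'_of_ge (h : z ≤ y) :
    GreenG' k y z = -(cosh (k * (1 - y)) / sinh k) * (k * cosh (k * z)) := by
  rcases h.eq_or_lt with rfl | h
  · rw [GreenG', if_pos le_rfl]
    ring
  · rw [GreenG', if_neg h.not_ge]
    ring

lemma GreenG'_nonpos (k : ℤ) (y z : ℝ) : GreenG' k y z ≤ 0 := by
  have hk := div_sinh_nonneg k
  rcases le_total y z with h | h
  · rw [GreenG'_of_le h]
    calc _ = -(k / sinh k * (cosh (k * y) * cosh (k * (1 - z)))) := by ring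
      _ ≤ 0 := neg_nonpos.mpr (mul_nonneg hk (by positivity))
  · rw [GreenG'_of_ge h]
    calc _ = -(k / sinh k * (cosh (k * (1 - y)) * cosh (k * z))) := by ring
      _ ≤ 0 := neg_nonpos.mpr (mul_nonneg hk (by positivity))

lemma continuous_GreenG' (k : ℤ) (y : ℝ) : Continuous (GreenG' k y) := by
  refine continuous_if_le continuous_const continuous_id (by fun_prop) (by fun_prop) ?_
  rintro z rfl
  ring

lemma integral_GreenG' (hk : k ≠ 0) (hy : y ∈ Icc 0 1) : ∫ z in 0..1, GreenG' k y z = -1 := by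
  have hint := (continuous_GreenG' k y).intervalIntegrable (μ := MeasureTheory.volume)
  have left : ∫ z in 0..y, GreenG' k y z = -(cosh (k * (1 - y)) / sinh k) * sinh (k * y) := by
    rw [integral_congr fun z hz => GreenG'_of_ge (uIcc_of_le hy.1 ▸ hz).2, integral_const_mul,
      integral_mul_cosh_mul]
    simp
  have right : ∫ z in y..1, GreenG' k y z = -(cosh (k * y) / sinh k) * sinh (k * (1 - y)) := by
    rw [integral_congr fun z hz => GreenG'_of_le (uIcc_of_le hy.2 ▸ hz).1, integral_const_mul,
      integral_mul_cosh_mul_sub]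
    simp
  have hsinh : sinh (k : ℝ) ≠ 0 := by simpa using hk
  have hadd : sinh (k * y) * cosh (k * (1 - y)) + cosh (k * y) * sinh (k * (1 - y)) = sinh k := by
    rw [← sinh_add]
    ring_nf
  rw [← integral_add_adjacent_intervals (hint 0 y) (hint y 1), left, right]
  field_simp
  linear_combination -hadd

lemma integral_abs_GreenG' (hk : k ≠ 0) (hy : y ∈ Icc 0 1) :
    ∫ z in 0..1, |GreenG' k y z| = 1 := by
  simp_rw [abs_of_nonpos (GreenG'_nonpos k y _), integral_neg, integral_GreenG' hk hy, neg_neg]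

end GreenG'

theorem greenPrime_L1_bound :
    ∃ C > (0 : ℝ), ∀ (k : ℤ), k ≠ 0 → ∀ y ∈ Set.Icc (0 : ℝ) 1,
      (∫ z in (0 : ℝ)..1, |GreenG' k y z|) ≤ C :=
  ⟨1, one_pos, fun _ hk _ hy => (integral_abs_GreenG' hk hy).le⟩
end
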